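/- Declarative and RPN proof formats are equivalent: an expression has a declarative proof (a finite sequence of steps, each an expression justified by an assertion and references to earlier steps or hypotheses) if and only if it has an RPN proof. -/

import Mathlib

/-- Expressions built from variables and symbols with fixed arities. -/
inductive Term (Sym : Type) (ar : Sym → ℕ) : Type
  | var : ℕ → Term Sym ar
  | app : (s : Sym) → (Fin (ar s) → Term Sym ar) → Term Sym ar

/-- Apply a substitution homomorphically. -/
def Term.subst {Sym : Type} {ar : Sym → ℕ} (σ : ℕ → Term Sym ar) :
    Term Sym ar → Term Sym ar
  | .var n => σ n
  | .app s a => .app s (fun i => Term.subst σ (a i))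

/-- An assertion (rule schema): a finite list of hypothesis expressions
and a conclusion expression over variables. -/
structure Assertion (Sym : Type) (ar : Sym → ℕ) : Type where
  hyps : List (Term Sym ar)
  concl : Term Sym ar

/-- Derivability from a set `S` of assertions and a set `H` of hypothesis
expressions: the inductive closure under hypotheses and `σ`-instances of
assertions whose `σ`-instantiated hypotheses are all derivable. -/
inductive Deriv {Sym : Type} {ar : Sym → ℕ}
    (S : Set (Assertion Sym ar)) (H : Set (Term Sym ar)) :
    Term Sym ar → Prop
  | hyp {e} : e ∈ H → Deriv S H e
  | app {A : Assertion Sym ar} {σ : ℕ → Term Sym ar} :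
      A ∈ S → (∀ h ∈ A.hyps, Deriv S H (h.subst σ)) →
      Deriv S H (A.concl.subst σ)

/-- A step of an RPN (Metamath-style) proof: either push a hypothesis
expression, or apply an assertion with a substitution. -/
inductive Step (Sym : Type) (ar : Sym → ℕ) : Type
  | hyp : Term Sym ar → Step Sym ar
  | app : Assertion Sym ar → (ℕ → Term Sym ar) → Step Sym ar

attribute [local instance] Classical.propDecidable

/-- Evaluate one RPN step on a stack of expressions.  A hypothesis step
pushes its expression; an assertion step pops the `σ`-instantiated
hypotheses (in order, topmost first) and pushes the `σ`-instance of the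
conclusion.  Returns `none` if the stack does not match. -/
noncomputable def evalStep {Sym : Type} {ar : Sym → ℕ} :
    Step Sym ar → List (Term Sym ar) → Option (List (Term Sym ar))
  | .hyp e, st => some (e :: st)
  | .app A σ, st =>
      let n := A.hyps.length
      if st.take n = (A.hyps.map (Term.subst σ)).reverse then
        some (A.concl.subst σ :: st.drop n)
      else none

/-- Evaluate a list of RPN steps on a stack. -/
noncomputable def evalProof {Sym : Type} {ar : Sym → ℕ} :
    List (Step Sym ar) → List (Term Sym ar) →
      Option (List (Term Sym ar))
  | [], st => some st
  | s :: p, st => (evalStep s st).bind (evalProof p)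

/-- A declarative (Russell-style) proof over assertions `S` and hypotheses
`H`: a list of expressions `p₁, …, pₙ` where each `pᵢ` is either a
hypothesis or the `σ`-instance of the conclusion of some assertion of `S`
whose `σ`-instantiated hypotheses all occur among `p₁, …, p_{i-1}` or the
hypotheses. -/
def DeclProof {Sym : Type} {ar : Sym → ℕ}
    (S : Set (Assertion Sym ar)) (H : Set (Term Sym ar))
    (L : List (Term Sym ar)) : Prop :=
  ∀ i : Fin L.length,
    L.get i ∈ H ∨
    ∃ A ∈ S, ∃ σ : ℕ → Term Sym ar,
      L.get i = A.concl.subst σ ∧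
      ∀ h ∈ A.hyps, h.subst σ ∈ H ∨ h.subst σ ∈ L.take i

/-!
Both formats are equivalent to derivability `Deriv S H`. A declarative proof derives each of its
lines by induction along the list, and an RPN proof keeps every entry of its stack derivable.
Conversely, a derivation tree is flattened into either format by post-order traversal: the
proofs of the instantiated hypotheses are concatenated and the conclusion is appended.
-/

section

variable {Sym : Type} {ar : Sym → ℕ} {S : Set (Assertion Sym ar)} {H : Set (Term Sym ar)}

def Justified (S : Set (Assertion Sym ar)) (H : Set (Term Sym ar)) (L : List (Term Sym ar))
    (e : Term Sym ar) : Prop :=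
  e ∈ H ∨ ∃ A ∈ S, ∃ σ : ℕ → Term Sym ar,
    e = A.concl.subst σ ∧ ∀ h ∈ A.hyps, h.subst σ ∈ H ∨ h.subst σ ∈ L

theorem Justified.mono {L L' : List (Term Sym ar)} {e : Term Sym ar} (hLL' : L ⊆ L')
    (he : Justified S H L e) : Justified S H L' e := by
  refine he.imp_right ?_
  rintro ⟨A, hA, σ, rfl, hhyps⟩
  exact ⟨A, hA, σ, rfl, fun h hh => (hhyps h hh).imp_right (@hLL' _)⟩

theorem Justified.deriv {L : List (Term Sym ar)} {e : Term Sym ar} (he : Justified S H L e)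
    (hL : ∀ x ∈ L, Deriv S H x) : Deriv S H e := by
  rcases he with he | ⟨A, hA, σ, rfl, hhyps⟩
  · exact .hyp he
  · exact .app hA fun h hh => (hhyps h hh).elim .hyp (hL _)

theorem declProof_nil : DeclProof S H [] := nofun

theorem declProof_concat_iff {L : List (Term Sym ar)} {e : Term Sym ar} :
    DeclProof S H (L ++ [e]) ↔ DeclProof S H L ∧ Justified S H L e := by
  constructor
  · intro h
    refine ⟨fun i => ?_, ?_⟩
    · have := h ⟨i, by simp⟩
      simpa [List.getElem_append_left, List.take_append_of_le_length i.isLt.le] using this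
    · simpa [Justified] using h ⟨L.length, by simp⟩
  · rintro ⟨hL, he⟩ ⟨i, hi⟩
    rw [List.length_append, List.length_singleton, Nat.lt_succ_iff] at hi
    rcases hi.lt_or_eq with hi | rfl
    · simpa [List.getElem_append_left hi, List.take_append_of_le_length hi.le] using hL ⟨i, hi⟩
    · simpa [Justified] using he

theorem DeclProof.append {L₁ L₂ : List (Term Sym ar)} (h₁ : DeclProof S H L₁)
    (h₂ : DeclProof S H L₂) : DeclProof S H (L₁ ++ L₂) := by
  induction L₂ using List.reverseRecOn with
  | nil => simpa
  | append_singleton L e ih =>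
    rw [← List.append_assoc, declProof_concat_iff] at *
    exact ⟨ih h₂.1, h₂.2.mono (List.subset_append_right _ _)⟩

theorem DeclProof.deriv {L : List (Term Sym ar)} (hL : DeclProof S H L) :
    ∀ x ∈ L, Deriv S H x := by
  induction L using List.reverseRecOn with
  | nil => simp
  | append_singleton L e ih =>
    rw [declProof_concat_iff] at hL
    have hderiv := ih hL.1
    exact List.forall_mem_append.2 ⟨hderiv, List.forall_mem_singleton.2 (hL.2.deriv hderiv)⟩

theorem exists_declProof_superset {l : List (Term Sym ar)}
    (hl : ∀ x ∈ l, ∃ L, DeclProof S H L ∧ x ∈ L) : ∃ M, DeclProof S H M ∧ l ⊆ M := by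
  induction l with
  | nil => exact ⟨[], declProof_nil, List.nil_subset _⟩
  | cons x l ih =>
    obtain ⟨L, hL, hxL⟩ := hl x List.mem_cons_self
    obtain ⟨M, hM, hlM⟩ := ih fun y hy => hl y (List.mem_cons_of_mem _ hy)
    exact ⟨L ++ M, hL.append hM, List.cons_subset.2
      ⟨List.mem_append_left _ hxL, List.Subset.trans hlM (List.subset_append_right _ _)⟩⟩

theorem Deriv.exists_declProof {e : Term Sym ar} (he : Deriv S H e) :
    ∃ L, DeclProof S H L ∧ L.getLast? = some e := by
  suffices ∃ M, DeclProof S H M ∧ Justified S H M e from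
    let ⟨M, hM, he⟩ := this
    ⟨M ++ [e], declProof_concat_iff.2 ⟨hM, he⟩, by simp⟩
  induction he with
  | hyp he => exact ⟨[], declProof_nil, .inl he⟩
  | @app A σ hA _ ih =>
    obtain ⟨M, hM, hhypsM⟩ := exists_declProof_superset (l := A.hyps.map (·.subst σ)) <| by
      simp only [List.mem_map, forall_exists_index, and_imp, forall_apply_eq_imp_iff₂]
      intro h hh
      obtain ⟨M, hM, hhM⟩ := ih h hh
      exact ⟨M ++ [h.subst σ], declProof_concat_iff.2 ⟨hM, hhM⟩, by simp⟩
    exact ⟨M, hM, .inr ⟨A, hA, σ, rfl, fun h hh => .inr (hhypsM (List.mem_map_of_mem hh))⟩⟩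

def Step.IsValid (S : Set (Assertion Sym ar)) (H : Set (Term Sym ar)) : Step Sym ar → Prop
  | .hyp e => e ∈ H
  | .app A _ => A ∈ S

theorem forall_isValid_iff {p : List (Step Sym ar)} :
    (∀ s ∈ p, s.IsValid S H) ↔
      (∀ x, Step.hyp x ∈ p → x ∈ H) ∧ (∀ A σ, Step.app A σ ∈ p → A ∈ S) := by
  refine ⟨fun hp => ⟨fun x hx => hp _ hx, fun A σ hA => hp _ hA⟩, ?_⟩
  rintro ⟨hH, hS⟩ (⟨x⟩ | ⟨A, σ⟩) hs
  exacts [hH x hs, hS A σ hs]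

theorem evalProof_append (p q : List (Step Sym ar)) (st : List (Term Sym ar)) :
    evalProof (p ++ q) st = (evalProof p st).bind (evalProof q) := by
  induction p generalizing st with
  | nil => rfl
  | cons s p ih =>
    simp only [List.cons_append, evalProof]
    cases evalStep s st <;> simp [ih]

theorem evalStep_app (A : Assertion Sym ar) (σ : ℕ → Term Sym ar) (st : List (Term Sym ar)) :
    evalStep (.app A σ) ((A.hyps.map (·.subst σ)).reverse ++ st) =
      some (A.concl.subst σ :: st) := by
  have hlen : ((A.hyps.map (·.subst σ)).reverse).length = A.hyps.length := by simp
  simp [evalStep, List.take_left' hlen, List.drop_left' hlen]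

theorem evalStep_deriv {s : Step Sym ar} {st st' : List (Term Sym ar)} (hs : s.IsValid S H)
    (hev : evalStep s st = some st') (hst : ∀ x ∈ st, Deriv S H x) : ∀ x ∈ st', Deriv S H x := by
  cases s with
  | hyp e =>
    cases hev
    exact List.forall_mem_cons.2 ⟨.hyp hs, hst⟩
  | app A σ =>
    simp only [evalStep] at hev
    split_ifs at hev with htake
    cases hev
    have hhyps (h) (hh : h ∈ A.hyps) : h.subst σ ∈ st.take A.hyps.length := by
      rw [htake]
      simpa using ⟨h, hh, rfl⟩
    exact List.forall_mem_cons.2 ⟨.app hs fun h hh => hst _ (List.mem_of_mem_take (hhyps h hh)),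
      fun x hx => hst x (List.mem_of_mem_drop hx)⟩

theorem evalProof_deriv {p : List (Step Sym ar)} {st st' : List (Term Sym ar)}
    (hp : ∀ s ∈ p, s.IsValid S H) (hev : evalProof p st = some st')
    (hst : ∀ x ∈ st, Deriv S H x) : ∀ x ∈ st', Deriv S H x := by
  induction p generalizing st with
  | nil =>
    cases hev
    exact hst
  | cons s p ih =>
    obtain ⟨st₁, hev₁, hev⟩ := Option.bind_eq_some_iff.1 hev
    exact ih (fun s hs => hp s (List.mem_cons_of_mem _ hs)) hev
      (evalStep_deriv (hp s List.mem_cons_self) hev₁ hst)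

theorem exists_rpn_push_reverse {l : List (Term Sym ar)}
    (hl : ∀ x ∈ l, ∃ p, (∀ s ∈ p, s.IsValid S H) ∧ ∀ st, evalProof p st = some (x :: st)) :
    ∃ q, (∀ s ∈ q, s.IsValid S H) ∧ ∀ st, evalProof q st = some (l.reverse ++ st) := by
  induction l with
  | nil => exact ⟨[], nofun, fun _ => rfl⟩
  | cons x l ih =>
    obtain ⟨p, hp, hpx⟩ := hl x List.mem_cons_self
    obtain ⟨q, hq, hql⟩ := ih fun y hy => hl y (List.mem_cons_of_mem _ hy)
    refine ⟨p ++ q, List.forall_mem_append.2 ⟨hp, hq⟩, fun st => ?_⟩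
    simp [evalProof_append, hpx, hql]

theorem Deriv.exists_rpn {e : Term Sym ar} (he : Deriv S H e) :
    ∃ p, (∀ s ∈ p, s.IsValid S H) ∧ ∀ st, evalProof p st = some (e :: st) := by
  induction he with
  | @hyp e he => exact ⟨[.hyp e], by simpa [Step.IsValid] using he, fun _ => rfl⟩
  | @app A σ hA _ ih =>
    obtain ⟨q, hq, hqhyps⟩ := exists_rpn_push_reverse (l := A.hyps.map (·.subst σ)) <| by
      simpa only [List.mem_map, forall_exists_index, and_imp, forall_apply_eq_imp_iff₂] using ih
    refine ⟨q ++ [.app A σ], List.forall_mem_append.2 ⟨hq, by simpa [Step.IsValid] using hA⟩,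
      fun st => ?_⟩
    simp [evalProof_append, hqhyps, evalStep_app, evalProof]

end

/-- Equivalence of the declarative and RPN proof formats: an expression has
a declarative proof (ending in that expression) iff it has an RPN proof
(evaluating on the empty stack to exactly that expression). -/
theorem decl_iff_rpn {Sym : Type} {ar : Sym → ℕ}
    (S : Set (Assertion Sym ar)) (H : Set (Term Sym ar))
    (e : Term Sym ar) :
    (∃ L : List (Term Sym ar), DeclProof S H L ∧ L.getLast? = some e) ↔
    (∃ p : List (Step Sym ar),
      (∀ x, Step.hyp x ∈ p → x ∈ H) ∧
      (∀ A σ, Step.app A σ ∈ p → A ∈ S) ∧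
      evalProof p [] = some [e]) := by
  constructor
  · rintro ⟨L, hL, hlast⟩
    obtain ⟨p, hp, hev⟩ := (hL.deriv e (List.mem_of_getLast? hlast)).exists_rpn
    obtain ⟨hH, hS⟩ := forall_isValid_iff.1 hp
    exact ⟨p, hH, hS, hev []⟩
  · rintro ⟨p, hH, hS, hev⟩
    exact (evalProof_deriv (forall_isValid_iff.2 ⟨hH, hS⟩) hev nofun e
      (List.mem_singleton_self e)).exists_declProof
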